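/- Let D ⊆ ℂ be the open unit disk, c ∈ ℝ, b > 0. Let u be harmonic on D \ {0} with exp(u(z))/|z|^c → b as z → 0, and let φ be a holomorphic injective map from an open neighborhood W of 0 into D with φ(0) = 0 and φ'(0) ≠ 0. Define v on W \ {0} by v(w) = u(φ(w)) + log|φ'(w)|. Then exp(v(w))/|w|^c → b·|φ'(0)|^{c+1} as w → 0. -/

import Mathlib

open Complex

/-- A function `u : ℂ → ℝ` is harmonic on `s`: twice continuously differentiable with
vanishing Laplacian. -/
def HarmonicOn (u : ℂ → ℝ) (s : Set ℂ) : Prop :=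
  ContDiffOn ℝ 2 u s ∧ ∀ z ∈ s,
    fderiv ℝ (fun w => fderiv ℝ u w 1) z 1 +
      fderiv ℝ (fun w => fderiv ℝ u w Complex.I) z Complex.I = 0

/-!
Near `0` we have `|φ(w)| ≈ |φ'(0)|·|w|`, so `exp(u(φ w)) / |w|^c` tends to `b·|φ'(0)|^c`;
the extra factor `exp(log |φ'(w)|) = |φ'(w)|` tends to `|φ'(0)|` because `φ'` is continuous.
-/

open Filter Topology

section

variable {𝕜 : Type*} [NontriviallyNormedField 𝕜]

lemma div_norm_rpow_eq_mul_norm_div_rpow {a w : 𝕜} (ha : a ≠ 0) (hw : w ≠ 0) (x c : ℝ) :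
    x / ‖w‖ ^ c = x / ‖a‖ ^ c * ‖a / w‖ ^ c := by
  have ha' : 0 < ‖a‖ := norm_pos_iff.mpr ha
  have hw' : 0 < ‖w‖ := norm_pos_iff.mpr hw
  rw [norm_div, Real.div_rpow ha'.le hw'.le]
  have : ‖a‖ ^ c ≠ 0 := (Real.rpow_pos_of_pos ha' c).ne'
  field_simp

theorem tendsto_comp_div_norm_rpow_of_hasDerivAt {g : 𝕜 → ℝ} {φ : 𝕜 → 𝕜} {φ' : 𝕜} {b c : ℝ}
    (hg : Tendsto (fun z => g z / ‖z‖ ^ c) (𝓝[≠] 0) (𝓝 b))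
    (hφ : HasDerivAt φ φ' 0) (hφ0 : φ 0 = 0) (hφ' : φ' ≠ 0) :
    Tendsto (fun w => g (φ w) / ‖w‖ ^ c) (𝓝[≠] 0) (𝓝 (b * ‖φ'‖ ^ c)) := by
  have hφt : Tendsto φ (𝓝[≠] 0) (𝓝[≠] 0) := by simpa only [hφ0] using hφ.tendsto_nhdsNE hφ'
  have hslope : Tendsto (fun w => φ w / w) (𝓝[≠] 0) (𝓝 φ') := by
    have hφslope : slope φ 0 = fun w => φ w / w := by ext w; simp [slope_def_field, hφ0]
    exact hφslope ▸ hasDerivAt_iff_tendsto_slope.mp hφ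
  refine ((hg.comp hφt).mul (hslope.norm.rpow_const (.inl (norm_ne_zero_iff.mpr hφ')))).congr' ?_
  filter_upwards [hφ.eventually_ne (c := 0) hφ', self_mem_nhdsWithin] with w hφw hw
  exact (div_norm_rpow_eq_mul_norm_div_rpow hφw hw _ _).symm

end

theorem stmt8_general (c : ℝ) (b : ℝ) (u : ℂ → ℝ)
    (hlim : Filter.Tendsto (fun z : ℂ => Real.exp (u z) / ‖z‖ ^ c)
      (nhdsWithin 0 {(0 : ℂ)}ᶜ) (nhds b))
    (W : Set ℂ) (hW : IsOpen W) (h0W : (0 : ℂ) ∈ W)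
    (φ : ℂ → ℂ) (hφ : DifferentiableOn ℂ φ W)
    (hφ0 : φ 0 = 0) (hφ' : deriv φ 0 ≠ 0)
    (v : ℂ → ℝ)
    (hv : ∀ w ∈ W \ {0}, v w = u (φ w) + Real.log ‖deriv φ w‖) :
    Filter.Tendsto (fun w : ℂ => Real.exp (v w) / ‖w‖ ^ c)
      (nhdsWithin 0 {(0 : ℂ)}ᶜ) (nhds (b * ‖deriv φ 0‖ ^ (c + 1))) := by
  have hWnhds : W ∈ 𝓝 0 := hW.mem_nhds h0W
  have hφd : HasDerivAt φ (deriv φ 0) 0 := (hφ.differentiableAt hWnhds).hasDerivAt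
  have hderiv : Tendsto (fun w => ‖deriv φ w‖) (𝓝[≠] 0) (𝓝 ‖deriv φ 0‖) :=
    ((hφ.analyticOnNhd hW).deriv 0 h0W).continuousAt.norm.tendsto.mono_left nhdsWithin_le_nhds
  have hpos : 0 < ‖deriv φ 0‖ := norm_pos_iff.mpr hφ'
  rw [Real.rpow_add_one hpos.ne', ← mul_assoc]
  refine ((tendsto_comp_div_norm_rpow_of_hasDerivAt hlim hφd hφ0 hφ').mul hderiv).congr' ?_
  filter_upwards [nhdsWithin_le_nhds hWnhds, self_mem_nhdsWithin,
    hderiv.eventually (eventually_gt_nhds hpos)] with w hwW hw hdw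
  rw [hv w ⟨hwW, hw⟩, Real.exp_add, Real.exp_log hdw, mul_div_right_comm]

/-- Chart independence of the residue of a singular flat metric: under a holomorphic
change of coordinates `φ` fixing `0`, the transformed representation
`v = u ∘ φ + log |φ'|` satisfies `exp v / |w|^c → b·|φ'(0)|^(c+1)`. -/
theorem stmt8 (c : ℝ) (b : ℝ) (hb : 0 < b) (u : ℂ → ℝ)
    (hu : HarmonicOn u (Metric.ball (0 : ℂ) 1 \ {0}))
    (hlim : Filter.Tendsto (fun z : ℂ => Real.exp (u z) / ‖z‖ ^ c)
      (nhdsWithin 0 {(0 : ℂ)}ᶜ) (nhds b))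
    (W : Set ℂ) (hW : IsOpen W) (h0W : (0 : ℂ) ∈ W)
    (φ : ℂ → ℂ) (hφ : DifferentiableOn ℂ φ W) (hφinj : Set.InjOn φ W)
    (hφ0 : φ 0 = 0) (hφ' : deriv φ 0 ≠ 0)
    (hφmaps : Set.MapsTo φ W (Metric.ball (0 : ℂ) 1))
    (v : ℂ → ℝ)
    (hv : ∀ w ∈ W \ {0}, v w = u (φ w) + Real.log ‖deriv φ w‖) :
    Filter.Tendsto (fun w : ℂ => Real.exp (v w) / ‖w‖ ^ c)
      (nhdsWithin 0 {(0 : ℂ)}ᶜ) (nhds (b * ‖deriv φ 0‖ ^ (c + 1))) :=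
  stmt8_general c b u hlim W hW h0W φ hφ hφ0 hφ' v hv
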